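/- Let k ≥ 1, n₁,...,n_k ≥ 2, n = Σ n_i, and fix i with 1 ≤ i ≤ k. If 𝒢_i is the path P_{2^{n_i}}, then Σ_{j=1}^{2^{n_i}−1} θ(n, ξ_{n₁...n_k}^{-1}(ℬ_{ij})) = 2^{n−n_i}(2^{2n_i−1} − 2^{n_i−1}), where ℬ_{ij} = N_{2^{n₁}} × ⋯ × N_j × ⋯ × N_{2^{n_k}} with the initial segment N_j = {1,...,j} in the i-th coordinate and the full set in every other coordinate. -/

import Mathlib

/-!
Write `g v` for the Gray-code label of the `i`-th block of `v`. Every Gray label lies in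
`[1, 2^{n_i}]`, so the preimage of `ℬ_{ij}` is the sublevel set `{g ≤ j}`, and an edge `uv` of
`Q_n` with `g u < g v` is cut by exactly `g v - g u` of these sets: the sum is half the total
stretch `∑_{u ~ v} |g u - g v|`. Only edges in the directions of block `i` are stretched, and
each stretch pattern repeats `2^{n - n_i}` times, leaving the total stretch `W m` of `Q_m` under
the reflected Gray code, `m = n_i`. Flipping the first bit of `(b, a)` sends the label `x` to
`2^{m+1} + 1 - x`, and flipping any other bit keeps the stretch of the edge in `Q_m`, so
`W (m + 1) = 2 * 4^m + 2 * W m`, whence `W m = 4^m - 2^m`.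
-/

open Finset

/-- Number of coordinates in which two 0-1 vectors differ. -/
def diffCount {n : ℕ} (u v : Fin n → Bool) : ℕ :=
  (Finset.univ.filter fun i => u i ≠ v i).card

/-- Adjacency in the hypercube `Q_n`: differ in exactly one coordinate. -/
def cubeAdj {n : ℕ} (u v : Fin n → Bool) : Prop := diffCount u v = 1

instance {n : ℕ} (u v : Fin n → Bool) : Decidable (cubeAdj u v) :=
  inferInstanceAs (Decidable (diffCount u v = 1))

/-- `theta n S`: number of edges of `Q_n` with exactly one endpoint in `S`. -/
def theta (n : ℕ) (S : Finset (Fin n → Bool)) : ℕ :=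
  ((Finset.univ ×ˢ Finset.univ).filter fun p : (Fin n → Bool) × (Fin n → Bool) =>
    p.1 ∈ S ∧ p.2 ∉ S ∧ cubeAdj p.1 p.2).card

/-- The reflected Gray code map `ξ_n : {0,1}^n → {1,...,2^n}`. -/
def gray : (n : ℕ) → (Fin n → Bool) → ℕ
  | 0, _ => 1
  | n + 1, v =>
    if v 0 = false then gray n (fun i => v i.succ)
    else 2 ^ (n + 1) + 1 - gray n (fun i => v i.succ)

/-- Wirelength of an embedding `f` of `Q_n` into a host with distance `d`. -/
def wirelength {n : ℕ} {α : Type*} (d : α → α → ℕ) (f : (Fin n → Bool) → α) : ℕ :=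
  (∑ u : Fin n → Bool, ∑ v : Fin n → Bool, if cubeAdj u v then d (f u) (f v) else 0) / 2

/-- Cyclic distance on the cycle with `m` vertices labeled `1,...,m`. -/
def cycDist (m a b : ℕ) : ℕ := min (Nat.dist a b) (m - Nat.dist a b)

/-- The 2-order Gray code map. -/
def gray2 (n₁ n₂ : ℕ) (v : Fin (n₁ + n₂) → Bool) : ℕ × ℕ :=
  (gray n₁ fun i => v (Fin.castAdd n₂ i), gray n₂ fun i => v (Fin.natAdd n₁ i))
/-- Offset of the `i`-th block in the concatenation of blocks of sizes `n j`. -/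
def blockOffset {k : ℕ} (n : Fin k → ℕ) (i : Fin k) : ℕ :=
  ∑ j ∈ Finset.univ.filter (fun j => j < i), n j

lemma blockPos_lt {k : ℕ} (n : Fin k → ℕ) (i : Fin k) (t : Fin (n i)) :
    blockOffset n i + (t : ℕ) < ∑ j, n j := by
  have ht : (t : ℕ) < n i := t.isLt
  calc blockOffset n i + (t : ℕ) < blockOffset n i + n i := by omega
    _ = ∑ j ∈ insert i (Finset.univ.filter (fun j => j < i)), n j := by
        rw [Finset.sum_insert (by simp), Nat.add_comm]; rfl
    _ ≤ ∑ j, n j := Finset.sum_le_sum_of_subset (Finset.subset_univ _)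

/-- The position in `Fin (∑ j, n j)` of the `t`-th coordinate of the `i`-th block. -/
def blockPos {k : ℕ} (n : Fin k → ℕ) (i : Fin k) (t : Fin (n i)) : Fin (∑ j, n j) :=
  ⟨blockOffset n i + (t : ℕ), blockPos_lt n i t⟩

/-- The `i`-th block of a concatenated 0-1 vector. -/
def block {k : ℕ} (n : Fin k → ℕ) (v : Fin (∑ j, n j) → Bool) (i : Fin k) :
    Fin (n i) → Bool :=
  fun t => v (blockPos n i t)

/-- Splitting map realizing the identification `{0,1}^n ≅ ∏ {0,1}^{n_i}`. -/
def split {k : ℕ} (n : Fin k → ℕ) (v : Fin (∑ j, n j) → Bool) :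
    (i : Fin k) → Fin (n i) → Bool :=
  fun i => block n v i

/-- The `k`-order Gray code map `ξ_{n₁…n_k}`. -/
def grayK {k : ℕ} (n : Fin k → ℕ) (v : Fin (∑ j, n j) → Bool) : Fin k → ℕ :=
  fun i => gray (n i) (block n v i)

open Function

lemma Nat.dist_tsub_tsub {K x y : ℕ} (hx : x ≤ K) (hy : y ≤ K) :
    Nat.dist (K - x) (K - y) = Nat.dist x y := by
  unfold Nat.dist
  omega

lemma Nat.two_pow_two_mul_sub_two_pow (m : ℕ) :
    2 ^ (2 * m) - 2 ^ m = 2 * (2 ^ (2 * m - 1) - 2 ^ (m - 1)) := by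
  rcases m with _ | m
  · simp
  · rw [show 2 * (m + 1) = 2 * m + 1 + 1 by ring, Nat.add_sub_cancel, Nat.add_sub_cancel,
      pow_succ _ (2 * m + 1), pow_succ _ m]
    omega

lemma Fintype.sum_fin_succ_bool {M : Type*} [AddCommMonoid M] (m : ℕ)
    (f : (Fin (m + 1) → Bool) → M) :
    ∑ v, f v = ∑ a : Fin m → Bool, (f (Fin.cons false a) + f (Fin.cons true a)) := by
  rw [← (Fin.consEquiv fun _ => Bool).sum_comp, Fintype.sum_prod_type, Fintype.sum_bool,
    add_comm, sum_add_distrib]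
  rfl

lemma Nat.sum_dist_eq_two_mul_sum_tsub {α : Type*} [Fintype α] {σ : α → α}
    (hσ : Involutive σ) (f : α → ℕ) :
    ∑ x, Nat.dist (f x) (f (σ x)) = 2 * ∑ x, (f (σ x) - f x) := by
  have hswap : ∑ x, (f x - f (σ x)) = ∑ x, (f (σ x) - f x) :=
    Fintype.sum_bijective σ hσ.bijective _ _ fun x => by rw [hσ x]
  simp only [Nat.dist, sum_add_distrib, hswap, two_mul]

lemma sum_comp_of_injective {α β γ M : Type*} [Fintype α] [DecidableEq α] [Fintype β]
    [DecidableEq β] [Fintype γ] [AddCommMonoid M] {ι : β → α} (hι : Injective ι)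
    (H : (β → γ) → M) :
    ∑ v : α → γ, H (v ∘ ι) =
      Fintype.card γ ^ (Fintype.card α - Fintype.card β) • ∑ a : β → γ, H a := by
  classical
  let r : β ≃ Set.range ι := Equiv.ofInjective ι hι
  let e := Equiv.piEquivPiSubtypeProd (· ∈ Set.range ι) (fun _ => γ)
  have hcard : Fintype.card {x // x ∉ Set.range ι} = Fintype.card α - Fintype.card β := by
    rw [Fintype.card_subtype_compl, Fintype.card_congr r.symm]
  calc ∑ v : α → γ, H (v ∘ ι)
      = ∑ q : (Set.range ι → γ) × ({x // x ∉ Set.range ι} → γ), H (q.1 ∘ r) :=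
        e.sum_comp fun q => H (q.1 ∘ r)
    _ = Fintype.card ({x // x ∉ Set.range ι} → γ) • ∑ f : Set.range ι → γ, H (f ∘ r) := by
        simp [Fintype.sum_prod_type, Finset.smul_sum]
    _ = _ := by
        rw [Fintype.card_fun, hcard]
        congr 1
        exact (r.arrowCongr (Equiv.refl γ)).symm.sum_comp H

lemma sum_Icc_indicator_le_lt {M a b : ℕ} (ha : 1 ≤ a) (hb : b ≤ M + 1) :
    ∑ j ∈ Icc 1 M, (if a ≤ j ∧ ¬ b ≤ j then 1 else 0) = b - a := by
  rw [← card_filter, ← Nat.card_Ico a b]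
  congr 1
  ext j
  simp only [mem_filter, mem_Icc, mem_Ico]
  omega

def flipBit {N : ℕ} (c : Fin N) (v : Fin N → Bool) : Fin N → Bool :=
  update v c (!v c)

section FlipBit

variable {N : ℕ}

lemma flipBit_apply (c j : Fin N) (v : Fin N → Bool) :
    flipBit c v j = if j = c then !v c else v j :=
  update_apply v c _ j

lemma flipBit_involutive (c : Fin N) : Involutive (flipBit c) := by
  intro v
  funext j
  by_cases h : j = c <;> simp [flipBit_apply, h]

@[simp] lemma flipBit_zero_cons (b : Bool) (a : Fin N → Bool) :
    flipBit 0 (Fin.cons b a : Fin (N + 1) → Bool) = Fin.cons (!b) a := by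
  funext j
  refine Fin.cases ?_ (fun s => ?_) j <;> simp [flipBit_apply, Fin.succ_ne_zero]

@[simp] lemma flipBit_succ_cons (b : Bool) (a : Fin N → Bool) (s : Fin N) :
    flipBit s.succ (Fin.cons b a : Fin (N + 1) → Bool) = Fin.cons b (flipBit s a) := by
  funext j
  refine Fin.cases ?_ (fun t => ?_) j <;> simp [flipBit_apply, (Fin.succ_ne_zero s).symm]

lemma filter_ne_flipBit (c : Fin N) (u : Fin N → Bool) :
    univ.filter (fun j => u j ≠ flipBit c u j) = {c} := by
  ext j
  by_cases h : j = c <;> simp [flipBit_apply, h]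

lemma cubeAdj_iff_exists_flipBit {u v : Fin N → Bool} :
    cubeAdj u v ↔ ∃ c, v = flipBit c u := by
  constructor
  · rintro hadj
    obtain ⟨c, hc⟩ := card_eq_one.1 hadj
    refine ⟨c, funext fun j => ?_⟩
    have hj : u j ≠ v j ↔ j = c := by simpa using Finset.ext_iff.1 hc j
    by_cases h : j = c <;> cases hu : u j <;> cases hv : v j <;> simp_all [flipBit_apply]
  · rintro ⟨c, rfl⟩
    rw [cubeAdj, diffCount, filter_ne_flipBit, card_singleton]

lemma flipBit_left_injective (u : Fin N → Bool) : Injective fun c => flipBit c u := by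
  intro c c' h
  by_contra hne
  have := congrFun h c
  simp [flipBit_apply, hne] at this

lemma sum_cubeAdj_eq_sum_flipBit {M : Type*} [AddCommMonoid M] (u : Fin N → Bool)
    (F : (Fin N → Bool) → M) :
    ∑ v, (if cubeAdj u v then F v else 0) = ∑ c, F (flipBit c u) := by
  have himage : univ.filter (cubeAdj u) = univ.image fun c => flipBit c u := by
    ext v
    simp [cubeAdj_iff_exists_flipBit, eq_comm]
  rw [← sum_filter, himage, sum_image fun c _ c' _ h => flipBit_left_injective u h]

end FlipBit

section Gray

@[simp] lemma gray_cons_false (m : ℕ) (a : Fin m → Bool) :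
    gray (m + 1) (Fin.cons false a) = gray m a := by
  simp [gray]

@[simp] lemma gray_cons_true (m : ℕ) (a : Fin m → Bool) :
    gray (m + 1) (Fin.cons true a) = 2 ^ (m + 1) + 1 - gray m a := by
  simp [gray]

lemma gray_mem_Icc : ∀ (m : ℕ) (v : Fin m → Bool), gray m v ∈ Icc 1 (2 ^ m)
  | 0, _ => by simp [gray]
  | m + 1, v => by
    refine Fin.consCases (fun b a => ?_) v
    have := mem_Icc.1 (gray_mem_Icc m a)
    cases b <;> simp [pow_succ] <;> omega

lemma sum_dist_gray_reflect (m : ℕ) :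
    ∑ a : Fin m → Bool, Nat.dist (gray m a) (2 ^ (m + 1) + 1 - gray m a) = 2 ^ (2 * m) := by
  rcases m with _ | m
  · simp [gray, Nat.dist]
  · have hpair : ∀ a : Fin m → Bool,
        Nat.dist (gray (m + 1) (Fin.cons false a))
            (2 ^ (m + 2) + 1 - gray (m + 1) (Fin.cons false a)) +
          Nat.dist (gray (m + 1) (Fin.cons true a))
            (2 ^ (m + 2) + 1 - gray (m + 1) (Fin.cons true a)) =
        2 ^ (m + 2) := by
      intro a
      have := mem_Icc.1 (gray_mem_Icc m a)
      simp only [gray_cons_false, gray_cons_true, Nat.dist, pow_succ] at this ⊢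
      omega
    rw [Fintype.sum_fin_succ_bool, sum_congr rfl fun a _ => hpair a, sum_const, card_univ,
      Fintype.card_fun, Fintype.card_bool, Fintype.card_fin, smul_eq_mul, ← pow_add]
    congr 1
    omega

lemma sum_sum_dist_gray_flipBit (m : ℕ) :
    ∑ a : Fin m → Bool, ∑ t, Nat.dist (gray m a) (gray m (flipBit t a)) =
      2 ^ (2 * m) - 2 ^ m := by
  induction m with
  | zero => simp
  | succ m ih =>
    have hpair : ∀ a : Fin m → Bool,
        ∑ t, Nat.dist (gray (m + 1) (Fin.cons false a))
            (gray (m + 1) (flipBit t (Fin.cons false a))) +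
          ∑ t, Nat.dist (gray (m + 1) (Fin.cons true a))
            (gray (m + 1) (flipBit t (Fin.cons true a))) =
        2 * Nat.dist (gray m a) (2 ^ (m + 1) + 1 - gray m a) +
          2 * ∑ s, Nat.dist (gray m a) (gray m (flipBit s a)) := by
      intro a
      have hrefl : ∀ s, Nat.dist (2 ^ (m + 1) + 1 - gray m a)
          (2 ^ (m + 1) + 1 - gray m (flipBit s a)) = Nat.dist (gray m a) (gray m (flipBit s a)) :=
        fun s =>
          Nat.dist_tsub_tsub (by have := mem_Icc.1 (gray_mem_Icc m a); omega)
            (by have := mem_Icc.1 (gray_mem_Icc m (flipBit s a)); omega)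
      simp only [Fin.sum_univ_succ, flipBit_zero_cons, flipBit_succ_cons, Bool.not_false,
        Bool.not_true, gray_cons_false, gray_cons_true, hrefl]
      rw [Nat.dist_comm (2 ^ (m + 1) + 1 - gray m a)]
      ring
    have h2m : 2 ^ m ≤ 2 ^ (2 * m) := Nat.pow_le_pow_right two_pos (by omega)
    rw [Fintype.sum_fin_succ_bool, sum_congr rfl fun a _ => hpair a, sum_add_distrib, ← mul_sum,
      ← mul_sum, sum_dist_gray_reflect, ih, show 2 * (m + 1) = 2 * m + 2 by ring, pow_add,
      pow_succ]
    omega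

end Gray

lemma theta_eq_sum_sum (N : ℕ) (S : Finset (Fin N → Bool)) :
    theta N S = ∑ u, ∑ v, if u ∈ S ∧ v ∉ S ∧ cubeAdj u v then 1 else 0 := by
  rw [theta, card_filter, sum_product]

lemma sum_theta_sublevel {N M : ℕ} (g : (Fin N → Bool) → ℕ)
    (hg : ∀ v, g v ∈ Icc 1 (M + 1)) :
    ∑ j ∈ Icc 1 M, theta N (univ.filter fun v => g v ≤ j) =
      ∑ u, ∑ c, (g (flipBit c u) - g u) := by
  simp only [theta_eq_sum_sum, mem_filter, mem_univ, true_and]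
  rw [sum_comm]
  refine sum_congr rfl fun u _ => ?_
  rw [sum_comm]
  refine (sum_congr rfl fun v _ => ?_).trans (sum_cubeAdj_eq_sum_flipBit u fun v => g v - g u)
  by_cases hadj : cubeAdj u v
  · simpa [hadj] using sum_Icc_indicator_le_lt (mem_Icc.1 (hg u)).1 (mem_Icc.1 (hg v)).2
  · simp [hadj]

section Block

variable {k : ℕ} (n : Fin k → ℕ) (i : Fin k)

lemma blockPos_injective : Injective (blockPos n i) := fun t t' h =>
  Fin.ext (by simpa [blockPos] using congrArg Fin.val h)

lemma block_flipBit_blockPos (t : Fin (n i)) (v : Fin (∑ j, n j) → Bool) :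
    block n (flipBit (blockPos n i t) v) i = flipBit t (block n v i) := by
  funext s
  simp only [block, flipBit_apply, (blockPos_injective n i).eq_iff]

lemma block_flipBit_of_notMem_range {c : Fin (∑ j, n j)} (hc : c ∉ Set.range (blockPos n i))
    (v : Fin (∑ j, n j) → Bool) : block n (flipBit c v) i = block n v i := by
  funext s
  simp only [block, flipBit_apply]
  rw [if_neg fun h => hc ⟨s, h⟩]

lemma sum_sum_dist_comp_block (G : (Fin (n i) → Bool) → ℕ) :
    ∑ v, ∑ c, Nat.dist (G (block n v i)) (G (block n (flipBit c v) i)) =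
      2 ^ ((∑ l, n l) - n i) * ∑ a, ∑ t, Nat.dist (G a) (G (flipBit t a)) := by
  have hrow : ∀ v : Fin (∑ l, n l) → Bool,
      ∑ c, Nat.dist (G (block n v i)) (G (block n (flipBit c v) i)) =
        ∑ t, Nat.dist (G (block n v i)) (G (flipBit t (block n v i))) := fun v =>
    (Fintype.sum_of_injective (blockPos n i) (blockPos_injective n i) _ _
      (fun c hc => by rw [block_flipBit_of_notMem_range n i hc, Nat.dist_self])
      (fun t => by rw [block_flipBit_blockPos])).symm
  have hcomp := sum_comp_of_injective (γ := Bool) (blockPos_injective n i)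
    fun a => ∑ t, Nat.dist (G a) (G (flipBit t a))
  simp only [Fintype.card_bool, Fintype.card_fin, smul_eq_mul] at hcomp
  simp only [hrow]
  exact hcomp

end Block

theorem stmt16_general (k : ℕ) (n : Fin k → ℕ) (i : Fin k) :
    ∑ j ∈ Finset.Icc 1 (2 ^ n i - 1),
        theta (∑ l, n l) (Finset.univ.filter fun v : Fin (∑ l, n l) → Bool =>
          (∀ l, l ≠ i → grayK n v l ∈ Finset.Icc 1 (2 ^ n l)) ∧
            grayK n v i ∈ Finset.Icc 1 j) =
      2 ^ ((∑ l, n l) - n i) * (2 ^ (2 * n i - 1) - 2 ^ (n i - 1)) := by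
  have hcut : ∀ j, (univ.filter fun v : Fin (∑ l, n l) → Bool =>
      (∀ l, l ≠ i → grayK n v l ∈ Icc 1 (2 ^ n l)) ∧ grayK n v i ∈ Icc 1 j) =
        univ.filter fun v => grayK n v i ≤ j := fun j => by
    ext v
    rw [mem_filter, mem_filter]
    simp only [mem_univ, true_and, grayK, gray_mem_Icc, implies_true]
    exact ⟨fun h => (mem_Icc.1 h).2,
      fun h => mem_Icc.2 ⟨(mem_Icc.1 (gray_mem_Icc _ _)).1, h⟩⟩
  have hrange : ∀ v, grayK n v i ∈ Icc 1 (2 ^ n i - 1 + 1) := fun v => by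
    rw [Nat.sub_add_cancel Nat.one_le_two_pow]
    exact gray_mem_Icc _ _
  simp only [hcut, sum_theta_sublevel _ hrange]
  refine Nat.eq_of_mul_eq_mul_left two_pos ?_
  calc 2 * ∑ u, ∑ c, (grayK n (flipBit c u) i - grayK n u i)
      = ∑ c, 2 * ∑ u, (grayK n (flipBit c u) i - grayK n u i) := by rw [sum_comm, mul_sum]
    _ = ∑ c, ∑ u, Nat.dist (grayK n u i) (grayK n (flipBit c u) i) :=
        sum_congr rfl fun c _ =>
          (Nat.sum_dist_eq_two_mul_sum_tsub (flipBit_involutive c) (grayK n · i)).symm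
    _ = 2 ^ ((∑ l, n l) - n i) * (2 ^ (2 * n i) - 2 ^ n i) := by
        rw [sum_comm, ← sum_sum_dist_gray_flipBit]
        exact sum_sum_dist_comp_block n i (gray (n i))
    _ = 2 * (2 ^ ((∑ l, n l) - n i) * (2 ^ (2 * n i - 1) - 2 ^ (n i - 1))) := by
        rw [Nat.two_pow_two_mul_sub_two_pow]
        ring

/-- Sum of edge boundaries of Gray-code preimages of the cuts `ℬ_{ij}` for a path factor. -/
theorem stmt16 (k : ℕ) (hk : 1 ≤ k) (n : Fin k → ℕ) (hn : ∀ i, 2 ≤ n i) (i : Fin k) :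
    ∑ j ∈ Finset.Icc 1 (2 ^ n i - 1),
        theta (∑ l, n l) (Finset.univ.filter fun v : Fin (∑ l, n l) → Bool =>
          (∀ l, l ≠ i → grayK n v l ∈ Finset.Icc 1 (2 ^ n l)) ∧
            grayK n v i ∈ Finset.Icc 1 j) =
      2 ^ ((∑ l, n l) - n i) * (2 ^ (2 * n i - 1) - 2 ^ (n i - 1)) :=
  stmt16_general k n i
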